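/- arXiv:2309.00322 — 2 statements merged into one kernel-verified Lean document; each statement's English description precedes it below -/
import Mathlib

section
/- Let A be an inductively connected line arrangement of n ≥ 4 lines such that A ∉ 𝔛(n) ∪ 𝔛̄(n). Then there exists an order ω on A such that τ_i(A,ω) ≤ 2 for all i ∈ {1,…,n} and the subarrangement A₄ = ω⁻¹({1,2,3,4}) is generic, i.e. no three of its four lines are concurrent. -/
noncomputable section
attribute [local instance] Classical.propDecidable

/-- The projective plane: points of `ℙ(ℂ³)`.  A "line" of `ℂP²` with equation
`a x + b y + c z = 0` is identified with the point `(a : b : c)` of the dual plane. -/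
abbrev ProjPlane := Projectivization ℂ (Fin 3 → ℂ)

/-- The line `l = (a : b : c)` passes through the point `q = (x : y : z)`,
i.e. `a x + b y + c z = 0` (well defined on representatives). -/
def incident (l q : ProjPlane) : Prop := ∑ t : Fin 3, l.rep t * q.rep t = 0

/-- The set of indices of lines of the arrangement `A` passing through `q`. -/
def pointSet {ι : Type} [Fintype ι] [DecidableEq ι] (A : ι → ProjPlane) (q : ProjPlane) :
    Finset ι :=
  Finset.univ.filter fun i => incident (A i) q

/-- The combinatorics of the arrangement `A`: the collection of the sets `P(q)` of lines
through `q`, for the points `q` lying on at least two lines (the singular points). -/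
def combinatorics {ι : Type} [Fintype ι] [DecidableEq ι] (A : ι → ProjPlane) :
    Finset (Finset ι) :=
  Finset.univ.filter fun P => 2 ≤ P.card ∧ ∃ q, P = pointSet A q

/-- `τ_i(A, ω)`: the number of singular points of the subarrangement formed by the lines
placed before position `i` that lie on the line placed at position `i` (positions are
`0`-based, given by the order `ω`). -/
def tauArr {ι : Type} [Fintype ι] [DecidableEq ι] (A : ι → ProjPlane) {N : ℕ}
    (ω : ι ≃ Fin N) (i : Fin N) : ℕ :=
  ((combinatorics A).filter fun P =>
    ω.symm i ∈ P ∧ 2 ≤ (P.filter fun j => ω j < i).card).card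

/-- `A ∈ 𝔛(n)`: all lines pass through a common point. -/
def IsPencil {n : ℕ} (A : Fin n → ProjPlane) : Prop := ∃ q, ∀ i, incident (A i) q

/-- `A ∈ 𝔛̄(n)`: exactly `n - 1` of the lines pass through a common point. -/
def IsNearPencil {n : ℕ} (A : Fin n → ProjPlane) : Prop :=
  ∃ q, (Finset.univ.filter fun i => incident (A i) q).card = n - 1

/-!
Start from an order `ω` with all `τ_i ≤ 2` and let `k` be minimal such that the first `k` lines
contain a generic quadruple `Q`. Such a `k` exists: by induction on the number of lines, if no four
lines of a set are generic, then all but at most one of them pass through a common point, which is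
excluded by `A ∉ 𝔛(n) ∪ 𝔛̄(n)`. For the same reason all but at most one of the first `k - 1` lines
pass through a point `p`, so at most two of the first `k` lines miss `p`, and since `Q` is generic
both lie in `Q`. Moving `Q` to the front, permuting only the first `k` positions, keeps `τ_i ≤ 2`:
the first four lines of any order have `τ_i ≤ 2`; a line at a position `i < k` outside `Q` passes
through `p`, as do all earlier lines but the two lines of `Q` missing `p`, so its singular points
are `p` and the intersection of those two lines; the positions `i ≥ k` keep their `τ_i`.
-/

open Finset Projectivization

theorem Finset.card_filter_not_le_one_iff {α : Type*} {s : Finset α} {P : α → Prop}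
    [DecidablePred P] :
    #{a ∈ s | ¬ P a} ≤ 1 ↔ ∀ a ∈ s, ∀ b ∈ s, a ≠ b → P a ∨ P b := by
  simp only [card_le_one, mem_filter]
  exact ⟨fun h a ha b hb hab => by by_contra! hc; exact hab (h a ⟨ha, hc.1⟩ b ⟨hb, hc.2⟩),
    fun h a ha b hb => by by_contra hab; have := h a ha.1 b hb.1 hab; tauto⟩

theorem Equiv.Perm.exists_apply_mem_iff_of_subset {β : Type*} [Fintype β] [DecidableEq β]
    {s t u : Finset β} (hs : s ⊆ u) (ht : t ⊆ u) (h : #s = #t) :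
    ∃ σ : Equiv.Perm β, (∀ a, σ a ∈ t ↔ a ∈ s) ∧ ∀ a ∉ u, σ a = a := by
  have hcard : ∀ v ⊆ u, Fintype.card {x : u // x.1 ∈ v} = #v := fun v hv => by
    rw [Fintype.card_congr (Equiv.subtypeSubtypeEquivSubtype fun hx => hv hx), Fintype.card_coe]
  let e : {x : u // x.1 ∈ s} ≃ {x : u // x.1 ∈ t} :=
    Fintype.equivOfCardEq (by rw [hcard s hs, hcard t ht, h])
  refine ⟨Equiv.Perm.ofSubtype e.extendSubtype, fun a => ?_,
    fun a ha => Equiv.Perm.ofSubtype_apply_of_not_mem _ ha⟩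
  by_cases ha : a ∈ u
  · rw [Equiv.Perm.ofSubtype_apply_of_mem _ ha]
    by_cases has : a ∈ s
    · exact iff_of_true (e.extendSubtype_mem ⟨a, ha⟩ has) has
    · exact iff_of_false (e.extendSubtype_not_mem ⟨a, ha⟩ has) has
  · rw [Equiv.Perm.ofSubtype_apply_of_not_mem _ ha]
    exact iff_of_false (fun h => ha (ht h)) fun h => ha (hs h)

namespace LineArrangement

theorem incident_iff_orthogonal (l q : ProjPlane) : incident l q ↔ l.orthogonal q := by
  conv_rhs => rw [← l.mk_rep, ← q.mk_rep]
  exact (orthogonal_mk _ _).symm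

theorem exists_incident (l : ProjPlane) : ∃ q, incident l q := by
  have hker : LinearMap.ker (dotProductBilin ℂ ℂ l.rep) ≠ ⊥ :=
    LinearMap.ker_ne_bot_of_finrank_lt (by simp)
  obtain ⟨w, hw, hw0⟩ := (Submodule.ne_bot_iff _).mp hker
  refine ⟨mk ℂ w hw0, ?_⟩
  rw [incident_iff_orthogonal, ← l.mk_rep, orthogonal_mk]
  simpa using hw

theorem incident_cross_left {l₁ l₂ : ProjPlane} (h : l₁ ≠ l₂) : incident l₁ (cross l₁ l₂) :=
  (incident_iff_orthogonal _ _).mpr (orthogonal_cross_left h)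

theorem incident_cross_right {l₁ l₂ : ProjPlane} (h : l₁ ≠ l₂) : incident l₂ (cross l₁ l₂) :=
  (incident_iff_orthogonal _ _).mpr (orthogonal_cross_right h)

theorem eq_cross_of_incident {l₁ l₂ q : ProjPlane} (h : l₁ ≠ l₂) (h₁ : incident l₁ q)
    (h₂ : incident l₂ q) : q = cross l₁ l₂ := by
  rw [incident_iff_orthogonal] at h₁ h₂
  induction l₁ using Projectivization.ind with | h v hv =>
  induction l₂ using Projectivization.ind with | h w hw =>
  induction q using Projectivization.ind with | h u hu =>
  rw [orthogonal_mk] at h₁ h₂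
  rw [cross_mk_of_ne hv hw h, mk_eq_mk_iff_crossProduct_eq_zero, cross_cross_eq_smul_sub_smul',
    dotProduct_comm u w, h₁, h₂, zero_smul, zero_smul, sub_zero]

theorem eq_of_incident_of_ne {l₁ l₂ q q' : ProjPlane} (h : l₁ ≠ l₂) (h₁ : incident l₁ q)
    (h₂ : incident l₂ q) (h₁' : incident l₁ q') (h₂' : incident l₂ q') : q = q' :=
  (eq_cross_of_incident h h₁ h₂).trans (eq_cross_of_incident h h₁' h₂').symm

theorem exists_incident_incident (l₁ l₂ : ProjPlane) : ∃ q, incident l₁ q ∧ incident l₂ q := by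
  by_cases h : l₁ = l₂
  · obtain ⟨q, hq⟩ := exists_incident l₁
    exact ⟨q, hq, h ▸ hq⟩
  · exact ⟨_, incident_cross_left h, incident_cross_right h⟩

variable {ι : Type} {A : ι → ProjPlane}

theorem exists_forall_incident_of_card_le_two {M : Finset ι} (hM : #M ≤ 2) :
    ∃ q, ∀ j ∈ M, incident (A j) q := by
  obtain h | h | h : #M = 0 ∨ #M = 1 ∨ #M = 2 := by omega
  · simp [card_eq_zero.mp h]
  · obtain ⟨a, rfl⟩ := card_eq_one.mp h
    simpa using exists_incident (A a)
  · obtain ⟨a, b, -, rfl⟩ := card_eq_two.mp h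
    simpa using exists_incident_incident (A a) (A b)

def IsGeneric (A : ι → ProjPlane) (S : Finset ι) : Prop :=
  ∀ q, #{i ∈ S | incident (A i) q} ≤ 2

theorem exists_card_filter_not_incident_le_one {Q : Finset ι} (hQ4 : #Q ≤ 4)
    (hQ : ¬ IsGeneric A Q) : ∃ r, #{i ∈ Q | ¬ incident (A i) r} ≤ 1 := by
  obtain ⟨r, hr⟩ := not_forall.mp hQ
  refine ⟨r, ?_⟩
  have := card_filter_add_card_filter_not (s := Q) (fun i => incident (A i) r)
  omega

theorem IsGeneric.incident_of_notMem {Q S : Finset ι} (hQ : IsGeneric A Q) (hQS : Q ⊆ S)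
    (hQ4 : #Q = 4) {p : ProjPlane} (hS : #{j ∈ S | ¬ incident (A j) p} ≤ 2) {j : ι}
    (hjS : j ∈ S) (hjQ : j ∉ Q) : incident (A j) p := by
  have hoff : {j ∈ Q | ¬ incident (A j) p} = {j ∈ S | ¬ incident (A j) p} := by
    refine eq_of_subset_of_card_le (filter_subset_filter _ hQS) ?_
    have := hQ p
    have := card_filter_add_card_filter_not (s := Q) (fun i => incident (A i) p)
    omega
  by_contra hjp
  have hj : j ∈ {j ∈ S | ¬ incident (A j) p} := mem_filter.mpr ⟨hjS, hjp⟩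
  rw [← hoff] at hj
  exact hjQ (mem_filter.mp hj).1

theorem incident_cross_of_not_generic [DecidableEq ι] (hA : Function.Injective A)
    {x y g h : ι} {p : ProjPlane} (hxy : x ≠ y) (hgh : g ≠ h) (hx : incident (A x) p)
    (hy : incident (A y) p) (hg : ¬ incident (A g) p) (hh : ¬ incident (A h) p)
    (hQ : ¬ IsGeneric A {x, y, g, h}) :
    incident (A x) (cross (A g) (A h)) ∨ incident (A y) (cross (A g) (A h)) := by
  obtain ⟨r, hr⟩ := exists_card_filter_not_incident_le_one card_le_four hQ
  have hpair := card_filter_not_le_one_iff.mp hr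
  have hne : ∀ {a b}, incident (A a) p → ¬ incident (A b) p → a ≠ b := by
    rintro a b ha hb rfl; exact hb ha
  have hr_cross : incident (A g) r → incident (A h) r → r = cross (A g) (A h) :=
    eq_cross_of_incident (hA.ne hgh)
  by_cases hxr : incident (A x) r
  · have hyr : ¬ incident (A y) r := fun hyr => by
      obtain rfl := eq_of_incident_of_ne (hA.ne hxy) hxr hyr hx hy
      rcases hpair g (by simp) h (by simp) hgh with h' | h' <;> contradiction
    have hgr := (hpair y (by simp) g (by simp) (hne hy hg)).resolve_left hyr
    have hhr := (hpair y (by simp) h (by simp) (hne hy hh)).resolve_left hyr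
    exact Or.inl (hr_cross hgr hhr ▸ hxr)
  · have hgr := (hpair x (by simp) g (by simp) (hne hx hg)).resolve_left hxr
    have hhr := (hpair x (by simp) h (by simp) (hne hx hh)).resolve_left hxr
    have hyr := (hpair x (by simp) y (by simp) hxy).resolve_left hxr
    exact Or.inr (hr_cross hgr hhr ▸ hyr)

theorem card_filter_not_incident_insert_le_one [DecidableEq ι] (hA : Function.Injective A)
    {g : ι} {S : Finset ι} {p : ProjPlane} (hg : g ∉ S) (hS : 4 ≤ #S)
    (hp : #{i ∈ S | ¬ incident (A i) p} ≤ 1)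
    (hng : ∀ Q ⊆ insert g S, #Q = 4 → ¬ IsGeneric A Q) :
    #{i ∈ insert g S | ¬ incident (A i) p} ≤ 1 := by
  by_cases hgp : incident (A g) p
  · rwa [filter_insert, if_neg (not_not.mpr hgp)]
  rw [filter_insert, if_pos hgp]
  suffices hS_p : ∀ h ∈ S, incident (A h) p by
    rw [filter_false_of_mem fun i hi => not_not.mpr (hS_p i hi)]; simp
  intro h hhS
  by_contra hhp
  have hgh : g ≠ h := by rintro rfl; exact hg hhS
  have hT : 3 ≤ #{i ∈ S | incident (A i) p} := by
    have := card_filter_add_card_filter_not (s := S) (fun i => incident (A i) p)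
    omega
  set T := {i ∈ S | incident (A i) p}
  -- Each generic-free quadruple `{x, y, g, h}` with `x, y ∈ T` puts `x` or `y` through `g ∩ h`;
  -- two lines of `T` through `g ∩ h` then force `g ∩ h = p`, although `g` misses `p`.
  have hpair : ∀ x ∈ T, ∀ y ∈ T, x ≠ y →
      incident (A x) (cross (A g) (A h)) ∨ incident (A y) (cross (A g) (A h)) := by
    intro x hx y hy hxy
    simp only [T, mem_filter] at hx hy
    have hne : ∀ {a b}, incident (A a) p → ¬ incident (A b) p → a ≠ b := by
      rintro a b ha hb rfl; exact hb ha
    refine incident_cross_of_not_generic hA hxy hgh hx.2 hy.2 hgp hhp (hng _ ?_ ?_)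
    · simp [insert_subset_iff, hx.1, hy.1, hhS]
    · rw [card_insert_of_notMem, card_insert_of_notMem, card_pair hgh]
      · simp [hne hy.2 hgp, hne hy.2 hhp]
      · simp [hxy, hne hx.2 hgp, hne hx.2 hhp]
  have hTq : 2 ≤ #{i ∈ T | incident (A i) (cross (A g) (A h))} := by
    have := card_filter_not_le_one_iff.mpr hpair
    have := card_filter_add_card_filter_not (s := T) (fun i => incident (A i) (cross (A g) (A h)))
    omega
  obtain ⟨x, hx, y, hy, hxy⟩ := one_lt_card.mp hTq
  simp only [T, mem_filter] at hx hy
  exact hgp (eq_of_incident_of_ne (hA.ne hxy) hx.1.2 hy.1.2 hx.2 hy.2 ▸ incident_cross_left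
    (hA.ne hgh))

theorem exists_card_filter_not_incident_le_one_of_forall_not_generic [DecidableEq ι]
    (hA : Function.Injective A) {S : Finset ι} (hS : 4 ≤ #S)
    (hng : ∀ Q ⊆ S, #Q = 4 → ¬ IsGeneric A Q) : ∃ p, #{i ∈ S | ¬ incident (A i) p} ≤ 1 := by
  induction S using Finset.induction_on with
  | empty => simp at hS
  | insert g S hg ih =>
    by_cases hS4 : 4 ≤ #S
    · obtain ⟨p, hp⟩ := ih hS4 fun Q hQ => hng Q (hQ.trans (subset_insert _ _))
      exact ⟨p, card_filter_not_incident_insert_le_one hA hg hS4 hp hng⟩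
    · have h4 : #(insert g S) = 4 := by rw [card_insert_of_notMem hg] at hS ⊢; omega
      exact exists_card_filter_not_incident_le_one h4.le (hng _ subset_rfl h4)

theorem exists_generic_of_not_isPencil_of_not_isNearPencil {n : ℕ} {A : Fin n → ProjPlane}
    (hn : 4 ≤ n) (hA : Function.Injective A) (hX : ¬ IsPencil A) (hXb : ¬ IsNearPencil A) :
    ∃ Q : Finset (Fin n), #Q = 4 ∧ IsGeneric A Q := by
  by_contra! hng
  obtain ⟨p, hp⟩ := exists_card_filter_not_incident_le_one_of_forall_not_generic hA
    (S := univ) (by simpa using hn) fun Q _ h4 => hng Q h4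
  have hsum := card_filter_add_card_filter_not (s := univ) (fun i => incident (A i) p)
  rw [card_univ, Fintype.card_fin] at hsum
  obtain h0 | h1 : #{i | ¬ incident (A i) p} = 0 ∨ #{i | ¬ incident (A i) p} = 1 := by omega
  · refine hX ⟨p, fun i => not_not.mp fun hi => ?_⟩
    exact (filter_eq_empty_iff.mp (card_eq_zero.mp h0)) (mem_univ i) hi
  · exact hXb ⟨p, by omega⟩

section Orders

variable [Fintype ι] {N : ℕ}

-- `firstLines ω m` is the subarrangement `A_m` of the paper.
def firstLines (ω : ι ≃ Fin N) (m : ℕ) : Finset ι := {j | (ω j : ℕ) < m}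

@[simp]
theorem mem_firstLines {ω : ι ≃ Fin N} {m : ℕ} {j : ι} : j ∈ firstLines ω m ↔ (ω j : ℕ) < m := by
  simp [firstLines]

theorem card_firstLines (ω : ι ≃ Fin N) (m : ℕ) : #(firstLines ω m) = min N m := by
  rw [← Fin.card_filter_val_lt]
  exact card_equiv ω (by simp)

theorem card_filter_firstLines_succ_le (ω : ι ≃ Fin N) (m : ℕ) (P : ι → Prop) [DecidablePred P] :
    #{j ∈ firstLines ω (m + 1) | P j} ≤ #{j ∈ firstLines ω m | P j} + 1 :=
  calc #{j ∈ firstLines ω (m + 1) | P j}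
      ≤ #({j ∈ firstLines ω m | P j} ∪ ({j | (ω j : ℕ) = m} : Finset ι)) :=
        card_le_card fun j hj => by
          simp only [mem_filter, mem_firstLines, mem_union, mem_univ, true_and] at hj ⊢
          exact (Nat.lt_succ_iff_lt_or_eq.mp hj.1).imp (⟨·, hj.2⟩) id
    _ ≤ #{j ∈ firstLines ω m | P j} + #({j | (ω j : ℕ) = m} : Finset ι) := card_union_le _ _
    _ ≤ #{j ∈ firstLines ω m | P j} + 1 := by
        gcongr
        exact card_le_one.mpr fun a ha b hb =>
          ω.injective (Fin.ext (by rw [mem_filter_univ] at ha hb; omega))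

theorem exists_equiv_lt_card_iff_mem (ω : ι ≃ Fin N) {Q : Finset ι} {k : ℕ}
    (hQ : Q ⊆ firstLines ω k) :
    ∃ ω' : ι ≃ Fin N, (∀ j, (ω' j : ℕ) < #Q ↔ j ∈ Q) ∧
      (∀ j, (ω' j : ℕ) < k ↔ (ω j : ℕ) < k) ∧ ∀ j, k ≤ (ω j : ℕ) → ω' j = ω j := by
  have hQk : #Q ≤ min N k := card_firstLines ω k ▸ card_le_card hQ
  obtain ⟨σ, hσQ, hσk⟩ := Equiv.Perm.exists_apply_mem_iff_of_subset
    (s := Q.map ω.toEmbedding) (t := {i | (i : ℕ) < #Q}) (u := {i | (i : ℕ) < k})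
    (fun i hi => by
      obtain ⟨j, hj, rfl⟩ := mem_map.mp hi
      simpa using hQ hj)
    (fun i hi => by simp only [mem_filter_univ] at hi ⊢; omega)
    (by rw [card_map, Fin.card_filter_val_lt]; omega)
  have hσk' : ∀ a : Fin N, (σ a : ℕ) < k ↔ (a : ℕ) < k := fun a => by
    by_cases ha : (a : ℕ) < k
    · refine iff_of_true (by_contra fun h => ?_) ha
      have hfix := hσk (σ a) (by simpa using h)
      rw [σ.injective hfix] at h
      exact h ha
    · rw [hσk a (by simpa using ha)]
  refine ⟨ω.trans σ, fun j => ?_, fun j => ?_, fun j hj => hσk _ (by simpa using hj)⟩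
  · simpa using hσQ (ω j)
  · simpa using hσk' (ω j)

variable [DecidableEq ι]

theorem tauArr_congr {ω ω' : ι ≃ Fin N} {i : Fin N} (h₁ : ω.symm i = ω'.symm i)
    (h₂ : ∀ j, ω j < i ↔ ω' j < i) : tauArr A ω i = tauArr A ω' i := by
  simp only [tauArr, h₁, h₂]

theorem tauArr_le_card (ω : ι ≃ Fin N) (i : Fin N) {T : Finset ProjPlane}
    (hT : ∀ q j₁ j₂, j₁ ≠ j₂ → ω j₁ < i → ω j₂ < i → incident (A (ω.symm i)) q →
      incident (A j₁) q → incident (A j₂) q → q ∈ T) :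
    tauArr A ω i ≤ #T := by
  refine (card_le_card fun P hP => ?_).trans (card_image_le (f := pointSet A))
  simp only [combinatorics, mem_filter, mem_univ, true_and] at hP
  obtain ⟨⟨-, q, rfl⟩, hz, h2⟩ := hP
  obtain ⟨j₁, hj₁, j₂, hj₂, hne⟩ := one_lt_card.mp h2
  simp only [pointSet, mem_filter, mem_univ, true_and] at hz hj₁ hj₂
  exact mem_image_of_mem _ (hT q j₁ j₂ hne hj₁.2 hj₂.2 hz hj₁.1 hj₂.1)

theorem tauArr_le_two_of_incident (hA : Function.Injective A) {ω : ι ≃ Fin N} {i : Fin N}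
    {p : ProjPlane} (hz : incident (A (ω.symm i)) p)
    (hM : #{j | ω j < i ∧ ¬ incident (A j) p} ≤ 2) : tauArr A ω i ≤ 2 := by
  obtain ⟨q₀, hq₀⟩ := exists_forall_incident_of_card_le_two (A := A) hM
  simp only [mem_filter, mem_univ, true_and] at hq₀
  refine (tauArr_le_card ω i (T := {p, q₀}) ?_).trans card_le_two
  intro q j₁ j₂ hne h₁ h₂ hzq hq₁ hq₂
  have hz_ne : ∀ {j}, ω j < i → A j ≠ A (ω.symm i) := fun h =>
    hA.ne (by rintro rfl; simp at h)
  by_cases hp₁ : incident (A j₁) p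
  · simp [eq_of_incident_of_ne (hz_ne h₁) hq₁ hzq hp₁ hz]
  by_cases hp₂ : incident (A j₂) p
  · simp [eq_of_incident_of_ne (hz_ne h₂) hq₂ hzq hp₂ hz]
  simp [eq_of_incident_of_ne (hA.ne hne) hq₁ hq₂ (hq₀ _ ⟨h₁, hp₁⟩) (hq₀ _ ⟨h₂, hp₂⟩)]

theorem tauArr_le_two_of_lt_four (hA : Function.Injective A) (ω : ι ≃ Fin N) {i : Fin N}
    (hi : (i : ℕ) < 4) : tauArr A ω i ≤ 2 := by
  have hcard : #({j | ω j < i} : Finset ι) = i := by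
    rw [← Fin.card_Iio i]
    exact card_equiv ω (by simp)
  obtain hE | ⟨j₀, hj₀⟩ := ({j | ω j < i} : Finset ι).eq_empty_or_nonempty
  · obtain ⟨p, hp⟩ := exists_incident (A (ω.symm i))
    have hM : ({j | ω j < i ∧ ¬ incident (A j) p} : Finset ι) = ∅ :=
      filter_eq_empty_iff.mpr fun j _ hj => filter_eq_empty_iff.mp hE (mem_univ j) hj.1
    exact tauArr_le_two_of_incident hA hp (by simp [hM])
  · have hne : A (ω.symm i) ≠ A j₀ := hA.ne (by rintro rfl; simp at hj₀)
    refine tauArr_le_two_of_incident hA (incident_cross_left hne) ?_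
    calc #{j | ω j < i ∧ ¬ incident (A j) (cross (A (ω.symm i)) (A j₀))}
        ≤ #(({j | ω j < i} : Finset ι).erase j₀) := card_le_card fun j hj => by
          simp only [mem_filter, mem_univ, true_and, mem_erase] at hj ⊢
          exact ⟨by rintro rfl; exact hj.2 (incident_cross_right hne), hj.1⟩
      _ ≤ 2 := by rw [card_erase_of_mem hj₀, hcard]; omega

theorem exists_tauArr_le_two_firstLines_eq (hA : Function.Injective A) {ω : ι ≃ Fin N}
    (hω : ∀ i, tauArr A ω i ≤ 2) {k : ℕ} {Q : Finset ι} (hQ : Q ⊆ firstLines ω k) (hQ4 : #Q = 4)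
    {p : ProjPlane} (hp : ∀ j ∈ firstLines ω k, j ∉ Q → incident (A j) p)
    (hM : #{j ∈ firstLines ω k | ¬ incident (A j) p} ≤ 2) :
    ∃ ω' : ι ≃ Fin N, (∀ i, tauArr A ω' i ≤ 2) ∧ firstLines ω' 4 = Q := by
  obtain ⟨ω', hQ', hk', hfix⟩ := exists_equiv_lt_card_iff_mem ω hQ
  rw [hQ4] at hQ'
  refine ⟨ω', fun i => ?_, by ext j; simp [hQ']⟩
  by_cases hi4 : (i : ℕ) < 4
  · exact tauArr_le_two_of_lt_four hA ω' hi4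
  by_cases hik : (i : ℕ) < k
  · refine tauArr_le_two_of_incident hA (hp _ ?_ ?_) ((card_le_card fun j hj => ?_).trans hM)
    · simpa [← hk'] using hik
    · simpa [← hQ'] using hi4
    · simp only [mem_filter, mem_univ, true_and, mem_firstLines] at hj ⊢
      exact ⟨(hk' j).mp ((Fin.lt_def.mp hj.1).trans hik), hj.2⟩
  · have hsymm : ω'.symm i = ω.symm i := by
      rw [Equiv.symm_apply_eq, hfix _ (by simpa using not_lt.mp hik), Equiv.apply_symm_apply]
    rw [tauArr_congr hsymm fun j => ?_]
    · exact hω i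
    by_cases hj : k ≤ (ω j : ℕ)
    · rw [hfix j hj]
    · have hj' := (hk' j).mpr (not_le.mp hj)
      simp only [Fin.lt_def]
      omega

end Orders

end LineArrangement

open LineArrangement

/-- An inductively connected arrangement of `n ≥ 4` lines not in
`𝔛(n) ∪ 𝔛̄(n)` admits an order `ω` with `τ_i ≤ 2` for all `i` such that the first four
lines (in the order `ω`) are in generic position (no three concurrent). -/
theorem statement3 {n : ℕ} (hn : 4 ≤ n) (A : Fin n → ProjPlane)
    (hA : Function.Injective A)
    (hic : ∃ ω : Fin n ≃ Fin n, ∀ i, tauArr A ω i ≤ 2)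
    (hX : ¬ IsPencil A) (hXb : ¬ IsNearPencil A) :
    ∃ ω : Fin n ≃ Fin n, (∀ i, tauArr A ω i ≤ 2) ∧
      ∀ q : ProjPlane,
        (Finset.univ.filter fun i : Fin n => (ω i).val < 4 ∧ incident (A i) q).card ≤ 2 := by
  obtain ⟨ω, hω⟩ := hic
  obtain ⟨k, ⟨Q, hQk, hQ4, hQ⟩, hmin⟩ : ∃ k, (∃ Q ⊆ firstLines ω k, #Q = 4 ∧ IsGeneric A Q) ∧
      ∀ k' < k, ¬ ∃ Q ⊆ firstLines ω k', #Q = 4 ∧ IsGeneric A Q := by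
    obtain ⟨Q, hQ4, hQ⟩ := exists_generic_of_not_isPencil_of_not_isNearPencil hn hA hX hXb
    have hex : ∃ k, ∃ Q ⊆ firstLines ω k, #Q = 4 ∧ IsGeneric A Q :=
      ⟨n, Q, fun j _ => by simp, hQ4, hQ⟩
    exact ⟨Nat.find hex, Nat.find_spec hex, fun _ => Nat.find_min hex⟩
  suffices ∃ ω' : Fin n ≃ Fin n, (∀ i, tauArr A ω' i ≤ 2) ∧ firstLines ω' 4 = Q by
    obtain ⟨ω', hω', rfl⟩ := this
    refine ⟨ω', hω', fun q => ?_⟩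
    convert hQ q using 2
    ext j
    simp [firstLines]
  have hk : 4 ≤ k := hQ4 ▸ (card_le_card hQk).trans (card_firstLines ω k ▸ min_le_right _ _)
  obtain ⟨m, rfl⟩ : ∃ m, k = m + 1 := ⟨k - 1, by omega⟩
  rcases Nat.lt_or_ge m 4 with hm | hm
  · obtain rfl : m = 3 := by omega
    exact ⟨ω, hω, (eq_of_subset_of_card_le hQk (by rw [card_firstLines, hQ4]; omega)).symm⟩
  obtain ⟨p, hp⟩ := exists_card_filter_not_incident_le_one_of_forall_not_generic hA
    (S := firstLines ω m) (by rw [card_firstLines]; omega) fun Q' hQ' h4 hg =>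
      hmin m (by omega) ⟨Q', hQ', h4, hg⟩
  have hM := (card_filter_firstLines_succ_le ω m _).trans (Nat.add_le_add_right hp 1)
  exact exists_tauArr_le_two_firstLines_eq hA hω hQk hQ4
    (fun j hj hjQ => hQ.incident_of_notMem hQk hQ4 hM hj hjQ) hM
end
end

section
/- Let A be a line arrangement, let P be a multiple point of A whose vertex has degree at most 2 in the graph G_A, and let A_P = {ℓ ∈ A : the point P lies on ℓ}. Then there exists an order ω_P on A_P such that for every order ω on A∖A_P and every line ℓ ∈ A_P, one has τ(A, ω⊕ω_P, ℓ) ≤ 2, where ω⊕ω_P denotes the order on A placing the lines of A∖A_P first (ordered by ω) followed by the lines of A_P (ordered by ω_P), and τ(A,ω′,ℓ) = τ_{ω′(ℓ)}(A,ω′). -/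
noncomputable section
attribute [local instance] Classical.propDecidable

/-- The linear functional `x ↦ ∑ t, v t * x t` on `ℂ³`. -/
def dotL (v : Fin 3 → ℂ) : Module.Dual ℂ (Fin 3 → ℂ) where
  toFun x := ∑ t : Fin 3, v t * x t
  map_add' x y := by simp [mul_add, Finset.sum_add_distrib]
  map_smul' c x := by simp [Finset.mul_sum, mul_left_comm]

lemma dotL_single (v : Fin 3 → ℂ) (t : Fin 3) : dotL v (Pi.single t 1) = v t := by
  simp [dotL, Pi.single_apply]

/-- Two distinct lines of `ℂP²` meet in at most one point. -/
lemma lines_meet_once (l1 l2 p1 p2 : ProjPlane) (hl : l1 ≠ l2)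
    (h11 : incident l1 p1) (h21 : incident l2 p1)
    (h12 : incident l1 p2) (h22 : incident l2 p2) : p1 = p2 := by
  classical
  have hv1 : l1.rep ≠ 0 := Projectivization.rep_nonzero l1
  have hv2 : l2.rep ≠ 0 := Projectivization.rep_nonzero l2
  -- the representatives are not proportional
  have hnp : ∀ a : ℂ, a • l2.rep ≠ l1.rep := by
    intro a ha
    apply hl
    have : Projectivization.mk ℂ l1.rep hv1 = Projectivization.mk ℂ l2.rep hv2 :=
      (Projectivization.mk_eq_mk_iff' ℂ _ _ hv1 hv2).2 ⟨a, ha⟩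
    rwa [Projectivization.mk_rep, Projectivization.mk_rep] at this
  have hφeq : ∀ v w : Fin 3 → ℂ, dotL v = dotL w → v = w := by
    intro v w h
    funext t
    have := congrArg (fun φ => φ (Pi.single t 1)) h
    simpa [dotL_single] using this
  have hind : LinearIndependent ℂ ![dotL l1.rep, dotL l2.rep] := by
    rw [linearIndependent_fin2]
    constructor
    · intro h
      apply hv2
      have h0 : dotL l2.rep = 0 := by simpa using h
      have hd0 : dotL l2.rep = dotL 0 := by rw [h0]; ext x; simp [dotL]
      simpa using hφeq _ _ hd0
    · intro a ha
      simp only [Matrix.cons_val_one, Matrix.head_cons, Matrix.cons_val_zero] at ha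
      apply hnp a
      apply hφeq
      rw [← ha]
      ext x
      simp [dotL, Finset.mul_sum, mul_left_comm, mul_assoc]
  set W : Submodule ℂ (Module.Dual ℂ (Fin 3 → ℂ)) :=
    Submodule.span ℂ (Set.range ![dotL l1.rep, dotL l2.rep]) with hW
  have hrW : Module.finrank ℂ W = 2 := by
    rw [hW, finrank_span_eq_card hind]; simp
  have hco : Module.finrank ℂ W.dualCoannihilator = 1 := by
    have h3 : Module.finrank ℂ (Fin 3 → ℂ) = 3 := by simp
    have := Subspace.finrank_add_finrank_dualCoannihilator_eq W
    omega
  have hmem : ∀ p : ProjPlane, incident l1 p → incident l2 p →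
      p.rep ∈ W.dualCoannihilator := by
    intro p hp1 hp2
    rw [Submodule.mem_dualCoannihilator]
    intro φ hφ
    induction hφ using Submodule.span_induction with
    | mem φ hφ =>
      obtain ⟨t, rfl⟩ := hφ
      fin_cases t
      · exact hp1
      · exact hp2
    | zero => simp
    | add _ _ _ _ h1 h2 => simp [h1, h2]
    | smul c _ _ h => simp [h]
  have h1 := hmem p1 h11 h21
  have h2 := hmem p2 h12 h22
  have hsp : Submodule.span ℂ {p1.rep} ≤ W.dualCoannihilator := by
    rwa [Submodule.span_singleton_le_iff_mem]
  have hr1 : Module.finrank ℂ (Submodule.span ℂ {p1.rep}) = 1 :=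
    finrank_span_singleton (Projectivization.rep_nonzero p1)
  have heq : Submodule.span ℂ {p1.rep} = W.dualCoannihilator :=
    Submodule.eq_of_le_of_finrank_le hsp (by rw [hco, hr1])
  have hmem2 : p2.rep ∈ Submodule.span ℂ ({p1.rep} : Set (Fin 3 → ℂ)) := heq ▸ h2
  obtain ⟨c, hc⟩ := Submodule.mem_span_singleton.1 hmem2
  have : Projectivization.mk ℂ p2.rep (Projectivization.rep_nonzero p2)
      = Projectivization.mk ℂ p1.rep (Projectivization.rep_nonzero p1) :=
    (Projectivization.mk_eq_mk_iff' ℂ _ _ _ _).2 ⟨c, hc⟩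
  rw [Projectivization.mk_rep, Projectivization.mk_rep] at this
  exact this.symm

lemma mem_pointSet {ι : Type} [Fintype ι] [DecidableEq ι] {A : ι → ProjPlane}
    {q : ProjPlane} {i : ι} : i ∈ pointSet A q ↔ incident (A i) q := by
  simp [pointSet]

/-- A singular point containing two distinct lines through `q` is `pointSet A q`. -/
lemma sing_eq_of_two {n : ℕ} {A : Fin n → ProjPlane} (hA : Function.Injective A)
    {q : ProjPlane} {Q : Finset (Fin n)} (hQ : Q ∈ combinatorics A)
    {i j : Fin n} (hiQ : i ∈ Q) (hjQ : j ∈ Q) (hij : i ≠ j)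
    (hiP : i ∈ pointSet A q) (hjP : j ∈ pointSet A q) : Q = pointSet A q := by
  simp only [combinatorics, Finset.mem_filter] at hQ
  obtain ⟨-, -, q', rfl⟩ := hQ
  have h1 : incident (A i) q' := mem_pointSet.1 hiQ
  have h2 : incident (A j) q' := mem_pointSet.1 hjQ
  have h3 : incident (A i) q := mem_pointSet.1 hiP
  have h4 : incident (A j) q := mem_pointSet.1 hjP
  have : q' = q := lines_meet_once (A i) (A j) q' q (fun h => hij (hA h)) h1 h2 h3 h4
  rw [this]

/-- Let `P = pointSet A q` be a multiple point of `A` whose vertex has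
degree at most `2` in `G_A`, and `A_P` the set of lines through `P`.  There is an order
`ω_P` on `A_P` (encoded by the relative order induced by a permutation `σ`) such that for
every order `ω` on `A ∖ A_P`, the combined order `ω ⊕ ω_P` (any permutation `ω'` placing
the lines of `A ∖ A_P` first, then those of `A_P` in the order `σ`) satisfies
`τ(A, ω ⊕ ω_P, l) ≤ 2` for every line `l ∈ A_P`. -/
theorem statement7 {n : ℕ} (A : Fin n → ProjPlane) (hA : Function.Injective A)
    (q : ProjPlane) (hmult : 3 ≤ (pointSet A q).card)
    (hdeg : (((combinatorics A).filter fun P' =>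
        3 ≤ P'.card ∧ P' ≠ pointSet A q ∧ (P' ∩ pointSet A q).Nonempty)).card ≤ 2) :
    ∃ σ : Equiv.Perm (Fin n), ∀ ω' : Equiv.Perm (Fin n),
      ((∀ i ∈ pointSet A q, ∀ j, j ∉ pointSet A q → ω' j < ω' i) ∧
       (∀ i ∈ pointSet A q, ∀ i' ∈ pointSet A q, ω' i < ω' i' ↔ σ i < σ i')) →
      ∀ i ∈ pointSet A q, tauArr A ω' (ω' i) ≤ 2 := by
  classical
  set P : Finset (Fin n) := pointSet A q with hP
  set Bad : Finset (Finset (Fin n)) :=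
    (combinatorics A).filter fun P' => 3 ≤ P'.card ∧ P' ≠ P ∧ (P' ∩ P).Nonempty with hBadDef
  have npos : 0 < n := by
    have := hmult.trans (Finset.card_le_univ P)
    simp only [Finset.card_univ, Fintype.card_fin] at this
    omega
  -- disjointness of the bad points on two distinct lines of P
  have hdisj : ∀ {i j : Fin n}, i ∈ P → j ∈ P → i ≠ j →
      Disjoint (Bad.filter fun Q => i ∈ Q) (Bad.filter fun Q => j ∈ Q) := by
    intro i j hi hj hij
    rw [Finset.disjoint_left]
    intro Q hQi hQj
    simp only [Finset.mem_filter, hBadDef] at hQi hQj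
    exact hQi.1.2.2.1 (sing_eq_of_two hA hQi.1.1 hQi.2 hQj.2 hij hi hj)
  -- general inclusion
  have hsub : ∀ (ω' : Equiv.Perm (Fin n)), ∀ i ∈ P,
      ((combinatorics A).filter fun Q =>
        ω'.symm (ω' i) ∈ Q ∧ 2 ≤ (Q.filter fun j => ω' j < ω' i).card)
      ⊆ insert P (Bad.filter fun Q => i ∈ Q) := by
    intro ω' i hi Q hQ
    simp only [Finset.mem_filter, Equiv.symm_apply_apply] at hQ
    obtain ⟨hQc, hiQ, hcard⟩ := hQ
    by_cases hQP : Q = P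
    · rw [hQP]; exact Finset.mem_insert_self _ _
    · apply Finset.mem_insert_of_mem
      simp only [Finset.mem_filter, hBadDef]
      have hfs : (Q.filter fun j => ω' j < ω' i) ⊆ Q.erase i := by
        intro j hj
        simp only [Finset.mem_filter] at hj
        refine Finset.mem_erase.2 ⟨fun h => ?_, hj.1⟩
        exact absurd (h ▸ hj.2) (lt_irrefl _)
      have hcard2 : 2 ≤ (Q.erase i).card := le_trans hcard (Finset.card_le_card hfs)
      rw [Finset.card_erase_of_mem hiQ] at hcard2
      exact ⟨⟨hQc, by omega, hQP, ⟨i, Finset.mem_inter.2 ⟨hiQ, hi⟩⟩⟩, hiQ⟩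
  by_cases hex : ∃ i₀ ∈ P, 2 ≤ (Bad.filter fun Q => i₀ ∈ Q).card
  · obtain ⟨i₀, hi₀P, hi₀2⟩ := hex
    refine ⟨Equiv.swap i₀ ⟨0, npos⟩, ?_⟩
    rintro ω' ⟨hsep, hord⟩ i hiP
    have hτ : tauArr A ω' (ω' i) = ((combinatorics A).filter fun Q =>
        ω'.symm (ω' i) ∈ Q ∧ 2 ≤ (Q.filter fun j => ω' j < ω' i).card).card := rfl
    by_cases hii : i = i₀
    · subst hii
      -- P itself is not counted: no line of P comes before i₀
      have hPnot : ¬ (2 ≤ (P.filter fun j => ω' j < ω' i).card) := by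
        have : (P.filter fun j => ω' j < ω' i) = ∅ := by
          apply Finset.filter_eq_empty_iff.2
          intro j hj
          rw [hord j hj i hiP]
          simp [Equiv.swap_apply_left, Fin.lt_def]
        rw [this]
        simp
      have hsub2 : ((combinatorics A).filter fun Q =>
          ω'.symm (ω' i) ∈ Q ∧ 2 ≤ (Q.filter fun j => ω' j < ω' i).card)
          ⊆ Bad.filter fun Q => i ∈ Q := by
        intro Q hQ
        have := hsub ω' i hiP hQ
        rcases Finset.mem_insert.1 this with h | h
        · exfalso
          subst h
          simp only [Finset.mem_filter, Equiv.symm_apply_apply] at hQ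
          exact hPnot hQ.2.2
        · exact h
      calc tauArr A ω' (ω' i) ≤ (Bad.filter fun Q => i ∈ Q).card :=
            hτ ▸ Finset.card_le_card hsub2
        _ ≤ Bad.card := Finset.card_le_card (Finset.filter_subset _ _)
        _ ≤ 2 := hdeg
    · -- i ≠ i₀ : no bad point on line i at all
      have hBi : (Bad.filter fun Q => i ∈ Q).card = 0 := by
        have hd := hdisj hiP hi₀P hii
        have hun : (Bad.filter fun Q => i ∈ Q) ∪ (Bad.filter fun Q => i₀ ∈ Q) ⊆ Bad :=
          Finset.union_subset (Finset.filter_subset _ _) (Finset.filter_subset _ _)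
        have := Finset.card_le_card hun
        rw [Finset.card_union_of_disjoint hd] at this
        omega
      calc tauArr A ω' (ω' i)
          ≤ (insert P (Bad.filter fun Q => i ∈ Q)).card :=
            hτ ▸ Finset.card_le_card (hsub ω' i hiP)
        _ ≤ (Bad.filter fun Q => i ∈ Q).card + 1 := Finset.card_insert_le _ _
        _ ≤ 2 := by omega
  · push_neg at hex
    refine ⟨1, ?_⟩
    rintro ω' ⟨hsep, hord⟩ i hiP
    have hτ : tauArr A ω' (ω' i) = ((combinatorics A).filter fun Q =>
        ω'.symm (ω' i) ∈ Q ∧ 2 ≤ (Q.filter fun j => ω' j < ω' i).card).card := rfl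
    have hBi : (Bad.filter fun Q => i ∈ Q).card ≤ 1 := by
      have := hex i hiP
      omega
    calc tauArr A ω' (ω' i)
        ≤ (insert P (Bad.filter fun Q => i ∈ Q)).card :=
          hτ ▸ Finset.card_le_card (hsub ω' i hiP)
      _ ≤ (Bad.filter fun Q => i ∈ Q).card + 1 := Finset.card_insert_le _ _
      _ ≤ 2 := by omega
end
end
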